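/- arXiv:1910.13495 — 2 statements merged into one kernel-verified Lean document; each statement's English description precedes it below -/
import Mathlib

section
/- Let G be a group acting by homeomorphisms on a compact Hausdorff space Y whose action is minimal for a subgroup N of G, and suppose the fixed point set U = Fix_Y(t) of some t ∈ G is a nonempty clopen set. If φ : Y → X is a continuous G-equivariant map onto a compact Hausdorff G-space X, then there exist finitely many s₁,…,sₙ ∈ N with X = s₁·φ(U) ∪ ⋯ ∪ sₙ·φ(U), and hence φ(U) (which is closed) has nonempty interior and is contained in Fix_X(t). Consequently, if the G-action on X is topologically free (every Fix_X(t), t ≠ e, has empty interior), then every homeomorphism of Y given by a nontrivial element of G with clopen fixed point set has empty fixed point set. -/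
open scoped Pointwise

/-!
Minimality of `N` and compactness of `Y` give finitely many `N`-translates of the open set
`U = Fix_Y t` covering `Y`; pushing this cover forward along the equivariant surjection `φ`
gives finitely many translates of the compact, hence closed, set `φ(U)` covering `X`. A finite
union of closed sets with empty interior has empty interior, so some translate of `φ(U)`, and
therefore `φ(U)` itself, has nonempty interior. Since `φ(U) ⊆ Fix_X t`, topological freeness
forces `t = 1`.
-/

open Set MulAction

theorem interior_biUnion_finset_eq_empty {ι X : Type*} [TopologicalSpace X] (s : Finset ι)
    {f : ι → Set X} (hf : ∀ i ∈ s, IsClosed (f i)) (hint : ∀ i ∈ s, interior (f i) = ∅) :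
    interior (⋃ i ∈ s, f i) = ∅ := by
  classical
  induction s using Finset.induction_on with
  | empty => simp
  | insert a s _ ih =>
    simp only [Finset.mem_insert, forall_eq_or_imp] at hf hint
    rw [Finset.set_biUnion_insert,
      interior_union_isClosed_of_interior_empty hf.1 (ih hf.2 hint.2), hint.1]

section

variable {G Y X : Type*} [Group G] [MulAction G Y] [MulAction G X]

theorem Subgroup.isMinimal_of_isClosed_smul_invariant [TopologicalSpace Y]
    [ContinuousConstSMul G Y] (N : Subgroup G)
    (h : ∀ S : Set Y, S.Nonempty → IsClosed S → (∀ n ∈ N, ∀ y ∈ S, n • y ∈ S) → S = univ) :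
    IsMinimal N Y := by
  have : ContinuousConstSMul N Y := ⟨fun n ↦ continuous_const_smul (n : G)⟩
  rw [isMinimal_iff_isClosed_smul_invariant]
  refine fun S hS hinv ↦ S.eq_empty_or_nonempty.imp_right fun hne ↦ h S hne hS ?_
  exact fun n hn y hy ↦ hinv ⟨n, hn⟩ (smul_mem_smul_set hy)

theorem Subgroup.exists_finset_biUnion_smul_eq_univ [TopologicalSpace Y] [CompactSpace Y]
    [ContinuousConstSMul G Y] (N : Subgroup G) [IsMinimal N Y] {U : Set Y} (hU : IsOpen U)
    (hne : U.Nonempty) : ∃ s : Finset G, (∀ g ∈ s, g ∈ N) ∧ ⋃ g ∈ s, g • U = univ := by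
  classical
  have : ContinuousConstSMul N Y := ⟨fun n ↦ continuous_const_smul (n : G)⟩
  obtain ⟨I, hI⟩ := isCompact_univ.exists_finite_cover_smul N hU hne
  refine ⟨I.image (↑), by simp only [Finset.forall_mem_image]; exact fun n _ ↦ n.2, ?_⟩
  rw [Finset.set_biUnion_finset_image]
  exact univ_subset_iff.mp hI

theorem biUnion_smul_image_eq_univ_of_surjective {φ : Y → X}
    (hφeq : ∀ g : G, ∀ y : Y, φ (g • y) = g • φ y) (hφ : Function.Surjective φ)
    {s : Finset G} {U : Set Y} (hcover : ⋃ g ∈ s, g • U = univ) :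
    ⋃ g ∈ s, g • φ '' U = univ := by
  have hφU (g : G) : φ '' (g • U) = g • φ '' U := image_smul_set (MulActionHom.mk φ hφeq) g U
  simp_rw [← hφU, ← image_iUnion₂, hcover]
  exact image_univ_of_surjective hφ

theorem IsClosed.interior_nonempty_of_biUnion_smul_eq_univ [TopologicalSpace X]
    [ContinuousConstSMul G X] [Nonempty X] {A : Set X} (hA : IsClosed A) {s : Finset G}
    (hcover : ⋃ g ∈ s, g • A = univ) : (interior A).Nonempty := by
  by_contra! hempty
  have := interior_biUnion_finset_eq_empty s (fun g _ ↦ hA.smul g)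
    (fun g _ ↦ by rw [interior_smul, hempty, smul_set_empty])
  simp [hcover] at this

theorem image_fixedBy_subset {φ : Y → X} (hφeq : ∀ g : G, ∀ y : Y, φ (g • y) = g • φ y)
    (t : G) : φ '' fixedBy Y t ⊆ fixedBy X t := by
  rintro _ ⟨y, hy, rfl⟩
  rw [mem_fixedBy, ← hφeq, hy]

end

theorem stmt2_general {G Y X : Type*} [Group G]
    [TopologicalSpace Y] [CompactSpace Y]
    [TopologicalSpace X] [T2Space X]
    [MulAction G Y] [MulAction G X]
    (hY : ∀ g : G, Continuous fun y : Y => g • y)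
    (hX : ∀ g : G, Continuous fun x : X => g • x)
    (N : Subgroup G)
    (hNmin : ∀ S : Set Y, S.Nonempty → IsClosed S → (∀ n ∈ N, ∀ y ∈ S, n • y ∈ S) →
      S = Set.univ)
    (t : G)
    (hUclopen : IsClopen {y : Y | t • y = y}) (hUne : {y : Y | t • y = y}.Nonempty)
    (φ : Y → X) (hφc : Continuous φ)
    (hφeq : ∀ g : G, ∀ y : Y, φ (g • y) = g • φ y)
    (hφsurj : Function.Surjective φ) :
    (∃ s : Finset G, (∀ g ∈ s, g ∈ N) ∧
        (⋃ g ∈ s, g • (φ '' {y : Y | t • y = y})) = Set.univ) ∧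
    (interior (φ '' {y : Y | t • y = y})).Nonempty ∧
    (φ '' {y : Y | t • y = y}) ⊆ {x : X | t • x = x} ∧
    ((∀ g : G, g ≠ 1 → interior {x : X | g • x = x} = ∅) → t = 1) := by
  have : ContinuousConstSMul G Y := ⟨hY⟩
  have : ContinuousConstSMul G X := ⟨hX⟩
  have : IsMinimal N Y := N.isMinimal_of_isClosed_smul_invariant hNmin
  have : Nonempty X := ⟨φ hUne.some⟩
  obtain ⟨s, hsN, hcoverY⟩ := N.exists_finset_biUnion_smul_eq_univ hUclopen.isOpen hUne
  have hcoverX := biUnion_smul_image_eq_univ_of_surjective hφeq hφsurj hcoverY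
  have hint := (hUclopen.isClosed.isCompact.image hφc).isClosed
    |>.interior_nonempty_of_biUnion_smul_eq_univ hcoverX
  have hfix := image_fixedBy_subset hφeq t
  refine ⟨⟨s, hsN, hcoverX⟩, hint, hfix, fun hfree ↦ ?_⟩
  by_contra ht
  exact (hint.mono (interior_mono hfix)).ne_empty (hfree t ht)

/-- Covering argument: if `N` acts minimally on `Y`, `U = Fix_Y t` is nonempty clopen, and
`φ : Y → X` is a continuous `G`-equivariant surjection, then finitely many `N`-translates of
`φ(U)` cover `X`, so `φ(U)` has nonempty interior and lies in `Fix_X t`; hence topological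
freeness of the `G`-action on `X` forces `t = 1`. -/
theorem stmt2 {G Y X : Type*} [Group G]
    [TopologicalSpace Y] [CompactSpace Y] [T2Space Y]
    [TopologicalSpace X] [CompactSpace X] [T2Space X]
    [MulAction G Y] [MulAction G X]
    (hY : ∀ g : G, Continuous fun y : Y => g • y)
    (hX : ∀ g : G, Continuous fun x : X => g • x)
    (N : Subgroup G)
    (hNmin : ∀ S : Set Y, S.Nonempty → IsClosed S → (∀ n ∈ N, ∀ y ∈ S, n • y ∈ S) →
      S = Set.univ)
    (t : G)
    (hUclopen : IsClopen {y : Y | t • y = y}) (hUne : {y : Y | t • y = y}.Nonempty)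
    (φ : Y → X) (hφc : Continuous φ)
    (hφeq : ∀ g : G, ∀ y : Y, φ (g • y) = g • φ y)
    (hφsurj : Function.Surjective φ) :
    (∃ s : Finset G, (∀ g ∈ s, g ∈ N) ∧
        (⋃ g ∈ s, g • (φ '' {y : Y | t • y = y})) = Set.univ) ∧
    (interior (φ '' {y : Y | t • y = y})).Nonempty ∧
    (φ '' {y : Y | t • y = y}) ⊆ {x : X | t • x = x} ∧
    ((∀ g : G, g ≠ 1 → interior {x : X | g • x = x} = ∅) → t = 1) :=
  stmt2_general hY hX N hNmin t hUclopen hUne φ hφc hφeq hφsurj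
end

section
/- Every homeomorphism of an extremally disconnected compact Hausdorff space has clopen fixed point set (Frolík's theorem, statement only in the special case needed: if f : X → X is a homeomorphism of an extremally disconnected compact Hausdorff space, then {x ∈ X : f x = x} is clopen). -/
/-!
Among the open sets `U` with `U ∩ f⁻¹(U) = ∅` choose a maximal one by Zorn's lemma. In an
extremally disconnected space disjoint open sets have disjoint closures, so the closure of `U`
still has this property and maximality makes `U` clopen. Then `K = U ∪ f⁻¹(U) ∪ f(U)` is clopen
and is exactly the set of non-fixed points: a fixed point cannot lie in `K`, and a non-fixed point
outside `K` has, by the Hausdorff property, an open neighbourhood disjoint from its preimage and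
from `K`, which could be added to `U`.
-/

open Set

section

variable {X : Type*} [TopologicalSpace X]

def IsOpenDisplaced (f : X → X) (U : Set X) : Prop :=
  IsOpen U ∧ Disjoint U (f ⁻¹' U)

theorem exists_maximal_isOpenDisplaced (f : X → X) :
    ∃ U, Maximal (IsOpenDisplaced f) U := by
  refine zorn_subset _ fun c hc hchain => ⟨⋃₀ c, ⟨isOpen_sUnion fun s hs => (hc hs).1, ?_⟩,
    fun s hs => subset_sUnion_of_mem hs⟩
  rw [disjoint_left]
  rintro x ⟨A, hAc, hxA⟩ ⟨B, hBc, hfxB⟩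
  rcases hchain.total hAc hBc with hAB | hBA
  · exact disjoint_left.mp (hc hBc).2 (hAB hxA) hfxB
  · exact disjoint_left.mp (hc hAc).2 hxA (hBA hfxB)

theorem exists_isOpen_mem_disjoint_preimage [T2Space X] {f : X → X} (hf : Continuous f) {x : X}
    (hx : f x ≠ x) : ∃ O, IsOpen O ∧ x ∈ O ∧ Disjoint O (f ⁻¹' O) := by
  obtain ⟨A, B, hA, hB, hxA, hfxB, hAB⟩ := t2_separation hx.symm
  refine ⟨A ∩ f ⁻¹' B, hA.inter (hB.preimage hf), ⟨hxA, hfxB⟩, ?_⟩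
  exact (hAB.preimage f).symm.mono inter_subset_right (preimage_mono inter_subset_left)

namespace Maximal

variable {f : X → X} {U : Set X}

theorem isClosed_of_isOpenDisplaced [ExtremallyDisconnected X]
    (hU : Maximal (IsOpenDisplaced f) U) (hf : Continuous f) (hf' : IsOpenMap f) : IsClosed U := by
  obtain ⟨hUo, hUf⟩ := hU.prop
  have hclosure : IsOpenDisplaced f (closure U) := by
    refine ⟨ExtremallyDisconnected.open_closure U hUo, ?_⟩
    exact (ExtremallyDisconnected.disjoint_closure_of_disjoint_isOpen hUf hUo
      (hUo.preimage hf)).mono_right hf'.preimage_closure_subset_closure_preimage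
  exact closure_subset_iff_isClosed.mp (hU.2 hclosure subset_closure)

theorem subset_of_isOpenDisplaced (hU : Maximal (IsOpenDisplaced f) U) {O : Set X}
    (hO : IsOpenDisplaced f O) (hUO : Disjoint U (f ⁻¹' O)) (hOU : Disjoint O (f ⁻¹' U)) :
    O ⊆ U := by
  have hunion : IsOpenDisplaced f (U ∪ O) := by
    refine ⟨hU.prop.1.union hO.1, ?_⟩
    rw [preimage_union, disjoint_union_left, disjoint_union_right, disjoint_union_right]
    exact ⟨⟨hU.prop.2, hUO⟩, hOU, hO.2⟩
  exact union_subset_iff.mp (hU.2 hunion subset_union_left) |>.2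

end Maximal

theorem setOf_apply_eq_self_eq_compl [T2Space X] (f : X ≃ₜ X) {U : Set X}
    (hU : Maximal (IsOpenDisplaced f) U) (hUc : IsClosed U) :
    {x | f x = x} = (U ∪ f ⁻¹' U ∪ f.symm ⁻¹' U)ᶜ := by
  set K := U ∪ f ⁻¹' U ∪ f.symm ⁻¹' U
  ext x
  constructor
  · intro (hx : f x = x)
    have hx' : f.symm x = x := by rw [f.symm_apply_eq, hx]
    have hxU : x ∉ U := fun h => disjoint_left.mp hU.prop.2 h (by simpa [hx] using h)
    simp [K, hx, hx', hxU]
  · intro (hxK : x ∉ K)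
    by_contra hx
    obtain ⟨O, hO, hxO, hOf⟩ := exists_isOpen_mem_disjoint_preimage f.continuous hx
    have hKc : IsClosed K := (hUc.union (hUc.preimage f.continuous)).union
      (hUc.preimage f.symm.continuous)
    have hO' : IsOpenDisplaced f (O \ K) :=
      ⟨hO.sdiff hKc, hOf.mono sdiff_subset (preimage_mono sdiff_subset)⟩
    have hUO : Disjoint U (f ⁻¹' (O \ K)) := disjoint_left.mpr fun u hu hfu =>
      hfu.2 (Or.inr (by simpa using hu))
    have hOU : Disjoint (O \ K) (f ⁻¹' U) := disjoint_left.mpr fun y hy hfy =>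
      hy.2 (Or.inl (Or.inr hfy))
    exact hxK (Or.inl (Or.inl (hU.subset_of_isOpenDisplaced hO' hUO hOU ⟨hxO, hxK⟩)))

end

theorem stmt3_general {X : Type*} [TopologicalSpace X] [T2Space X]
    [ExtremallyDisconnected X] (f : X ≃ₜ X) :
    IsClopen {x : X | f x = x} := by
  obtain ⟨U, hU⟩ := exists_maximal_isOpenDisplaced f
  have hUc : IsClopen U := ⟨hU.isClosed_of_isOpenDisplaced f.continuous f.isOpenMap, hU.prop.1⟩
  rw [setOf_apply_eq_self_eq_compl f hU hUc.1]
  exact ((hUc.union (hUc.preimage f.continuous)).union (hUc.preimage f.symm.continuous)).compl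

/-- Frolík's theorem: the fixed point set of a homeomorphism of an extremally disconnected
compact Hausdorff space is clopen. -/
theorem stmt3 {X : Type*} [TopologicalSpace X] [CompactSpace X] [T2Space X]
    [ExtremallyDisconnected X] (f : X ≃ₜ X) :
    IsClopen {x : X | f x = x} :=
  stmt3_general f
end
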